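/- arXiv:1901.05654 — 2 statements merged into one kernel-verified Lean document; each statement's English description precedes it below -/
import Mathlib

section
/- Let k be a field of characteristic different from 2 and let W_3 be the associative k-algebra with generators x12, x13, x23 and relations x12^2 = 0, x13^2 = 0, x23^2 = 0, x12*x23 + x23*x13 = 0, x12*x23 + x13*x12 = 0, x12*x13 + x23*x12 = 0, and x12*x13 - x13*x23 = 0. Then every product of three generators vanishes in W_3; equivalently, the degree-3 homogeneous component of W_3 is zero. -/
noncomputable section

/-- Generators of the free algebra on three letters: `0 ↦ x12`, `1 ↦ x13`, `2 ↦ x23`. -/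
def X (k : Type) [Field k] (i : Fin 3) : FreeAlgebra k (Fin 3) := FreeAlgebra.ι k i

/-- The seven defining quadratic relations of the Koszul dual algebra `W₃`:
`x12² = x13² = x23² = 0`, `x12*x23 + x23*x13 = 0`, `x12*x23 + x13*x12 = 0`,
`x12*x13 + x23*x12 = 0`, `x12*x13 - x13*x23 = 0`. -/
inductive W3Rel (k : Type) [Field k] :
    FreeAlgebra k (Fin 3) → FreeAlgebra k (Fin 3) → Prop
  | sq12 : W3Rel k (X k 0 * X k 0) 0
  | sq13 : W3Rel k (X k 1 * X k 1) 0
  | sq23 : W3Rel k (X k 2 * X k 2) 0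
  | rel4 : W3Rel k (X k 0 * X k 2 + X k 2 * X k 1) 0
  | rel5 : W3Rel k (X k 0 * X k 2 + X k 1 * X k 0) 0
  | rel6 : W3Rel k (X k 0 * X k 1 + X k 2 * X k 0) 0
  | rel7 : W3Rel k (X k 0 * X k 1 - X k 1 * X k 2) 0

/-- The algebra `W₃`, quotient of the free algebra by the two-sided ideal
generated by the seven quadratic relations. -/
abbrev W3 (k : Type) [Field k] : Type := RingQuot (W3Rel k)

/-- The images of the generators `x12, x13, x23` in `W₃`. -/
def y (k : Type) [Field k] (i : Fin 3) : W3 k :=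
  RingQuot.mkAlgHom k (W3Rel k) (X k i)

/-- In any ring, elements satisfying the seven `W₃` relations have all
twelve square-free triple products equal to zero. -/
lemma W3aux {A : Type} [Ring A] (a b c : A) (ha : a*a = 0) (hb : b*b = 0)
    (hc : c*c = 0) (h4 : a*c + c*b = 0) (h5 : a*c + b*a = 0)
    (h6 : a*b + c*a = 0) (h7 : a*b - b*c = 0) :
    a*b*a = 0 ∧ a*b*c = 0 ∧ a*c*a = 0 ∧ a*c*b = 0 ∧
    b*a*b = 0 ∧ b*a*c = 0 ∧ b*c*a = 0 ∧ b*c*b = 0 ∧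
    c*a*b = 0 ∧ c*a*c = 0 ∧ c*b*a = 0 ∧ c*b*c = 0 := by
  have h4' : a*c = -(c*b) := eq_neg_of_add_eq_zero_left h4
  have h5' : a*c = -(b*a) := eq_neg_of_add_eq_zero_left h5
  have h6' : a*b = -(c*a) := eq_neg_of_add_eq_zero_left h6
  have h7' : a*b = b*c := sub_eq_zero.mp h7
  have hba : b*a = c*b := neg_injective (h5'.symm.trans h4')
  have hca : c*a = -(a*b) := by rw [h6', neg_neg]
  have zacb : a*c*b = 0 := by
    rw [h4', neg_mul, mul_assoc, hb, mul_zero, neg_zero]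
  have zaba : a*b*a = 0 := by
    rw [mul_assoc, hba, ← mul_assoc]; exact zacb
  have zabc : a*b*c = 0 := by
    rw [h7', mul_assoc, hc, mul_zero]
  have zaca : a*c*a = 0 := by
    rw [h5', neg_mul, mul_assoc, ha, mul_zero, neg_zero]
  have zbab : b*a*b = 0 := by
    rw [mul_assoc, h7', ← mul_assoc, hb, zero_mul]
  have zbac : b*a*c = 0 := by
    rw [hba, mul_assoc, ← h7', ← mul_assoc, hca, neg_mul, mul_assoc, hb,
      mul_zero, neg_zero]
  have zbca : b*c*a = 0 := by rw [← h7']; exact zaba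
  have zbcb : b*c*b = 0 := by rw [← h7', mul_assoc, hb, mul_zero]
  have zcab : c*a*b = 0 := by
    rw [hca, neg_mul, mul_assoc, hb, mul_zero, neg_zero]
  have zcac : c*a*c = 0 := by rw [hca, neg_mul, zabc, neg_zero]
  have zcba : c*b*a = 0 := by rw [← hba, mul_assoc, ha, mul_zero]
  have zcbc : c*b*c = 0 := by rw [← hba]; exact zbac
  exact ⟨zaba, zabc, zaca, zacb, zbab, zbac, zbca, zbcb, zcab, zcac, zcba, zcbc⟩

/-- Every product of three generators vanishes in `W₃`: the degree-3
homogeneous component of `W₃` is zero. -/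
theorem W3_triple_products_eq_zero (k : Type) [Field k] (hk : (2 : k) ≠ 0) :
    ∀ i j l : Fin 3, y k i * y k j * y k l = 0 := by
  have key : ∀ (u v : FreeAlgebra k (Fin 3)), W3Rel k u v →
      RingQuot.mkAlgHom k (W3Rel k) u = RingQuot.mkAlgHom k (W3Rel k) v :=
    fun u v h => RingQuot.mkAlgHom_rel k h
  have ha : y k 0 * y k 0 = 0 := by
    simpa [y, map_mul] using key _ _ (W3Rel.sq12)
  have hb : y k 1 * y k 1 = 0 := by
    simpa [y, map_mul] using key _ _ (W3Rel.sq13)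
  have hc : y k 2 * y k 2 = 0 := by
    simpa [y, map_mul] using key _ _ (W3Rel.sq23)
  have h4 : y k 0 * y k 2 + y k 2 * y k 1 = 0 := by
    simpa [y, map_add, map_mul] using key _ _ (W3Rel.rel4)
  have h5 : y k 0 * y k 2 + y k 1 * y k 0 = 0 := by
    simpa [y, map_add, map_mul] using key _ _ (W3Rel.rel5)
  have h6 : y k 0 * y k 1 + y k 2 * y k 0 = 0 := by
    simpa [y, map_add, map_mul] using key _ _ (W3Rel.rel6)
  have h7 : y k 0 * y k 1 - y k 1 * y k 2 = 0 := by
    simpa [y, map_sub, map_mul] using key _ _ (W3Rel.rel7)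
  obtain ⟨zaba, zabc, zaca, zacb, zbab, zbac, zbca, zbcb, zcab, zcac, zcba, zcbc⟩ :=
    W3aux (y k 0) (y k 1) (y k 2) ha hb hc h4 h5 h6 h7
  have zaa : ∀ x : W3 k, y k 0 * y k 0 * x = 0 := fun x => by rw [ha, zero_mul]
  have zbb : ∀ x : W3 k, y k 1 * y k 1 * x = 0 := fun x => by rw [hb, zero_mul]
  have zcc : ∀ x : W3 k, y k 2 * y k 2 * x = 0 := fun x => by rw [hc, zero_mul]
  have zaa' : ∀ x : W3 k, x * y k 0 * y k 0 = 0 := fun x => by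
    rw [mul_assoc, ha, mul_zero]
  have zbb' : ∀ x : W3 k, x * y k 1 * y k 1 = 0 := fun x => by
    rw [mul_assoc, hb, mul_zero]
  have zcc' : ∀ x : W3 k, x * y k 2 * y k 2 = 0 := fun x => by
    rw [mul_assoc, hc, mul_zero]
  intro i j l
  fin_cases i <;> fin_cases j <;> fin_cases l <;>
    first
      | exact zaa _ | exact zbb _ | exact zcc _
      | exact zaa' _ | exact zbb' _ | exact zcc' _
      | exact zaba | exact zabc | exact zaca | exact zacb
      | exact zbab | exact zbac | exact zbca | exact zbcb
      | exact zcab | exact zcac | exact zcba | exact zcbc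
end
end

section
/- Let k be a field of characteristic different from 2 and let W_3 be the associative k-algebra with generators x12, x13, x23 and relations x12^2 = 0, x13^2 = 0, x23^2 = 0, x12*x23 + x23*x13 = 0, x12*x23 + x13*x12 = 0, x12*x13 + x23*x12 = 0, x12*x13 - x13*x23 = 0. Then the Hilbert series of W_3 is 1 + 3t + 2t^2: the graded components of W_3 have dimensions 1, 3, 2, 0, 0, ... in degrees 0, 1, 2, 3, 4, .... -/
noncomputable section

/-- The degree-`d` homogeneous component of `W₃`: the span of the images of all
words of length `d` in the generators. -/
def W3comp (k : Type) [Field k] (d : ℕ) : Submodule k (W3 k) :=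
  Submodule.span k
    (Set.range fun w : Fin d → Fin 3 => (List.ofFn fun i => y k (w i)).prod)

variable (k : Type) [Field k]

lemma wrel {a b : FreeAlgebra k (Fin 3)} (h : W3Rel k a b) :
    RingQuot.mkAlgHom k (W3Rel k) a = RingQuot.mkAlgHom k (W3Rel k) b :=
  RingQuot.mkAlgHom_rel k h

lemma rAA : y k 0 * y k 0 = 0 := by simpa [y] using wrel k W3Rel.sq12
lemma rBB : y k 1 * y k 1 = 0 := by simpa [y] using wrel k W3Rel.sq13
lemma rCC : y k 2 * y k 2 = 0 := by simpa [y] using wrel k W3Rel.sq23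
lemma r4 : y k 0 * y k 2 + y k 2 * y k 1 = 0 := by simpa [y] using wrel k W3Rel.rel4
lemma r5 : y k 0 * y k 2 + y k 1 * y k 0 = 0 := by simpa [y] using wrel k W3Rel.rel5
lemma r6 : y k 0 * y k 1 + y k 2 * y k 0 = 0 := by simpa [y] using wrel k W3Rel.rel6
lemma r7 : y k 0 * y k 1 - y k 1 * y k 2 = 0 := by simpa [y] using wrel k W3Rel.rel7

lemma hBA : y k 1 * y k 0 = -(y k 0 * y k 2) := by
  rw [eq_neg_iff_add_eq_zero, add_comm]; exact r5 k
lemma hCB : y k 2 * y k 1 = -(y k 0 * y k 2) := by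
  rw [eq_neg_iff_add_eq_zero, add_comm]; exact r4 k
lemma hCA : y k 2 * y k 0 = -(y k 0 * y k 1) := by
  rw [eq_neg_iff_add_eq_zero, add_comm]; exact r6 k
lemma hBC : y k 1 * y k 2 = y k 0 * y k 1 := (sub_eq_zero.mp (r7 k)).symm

lemma nmul (a b : W3 k) : -a * b = -(a * b) := neg_mul a b
lemma muln (a b : W3 k) : a * -b = -(a * b) := mul_neg a b
lemma mulz (a : W3 k) : a * (0 : W3 k) = 0 := mul_zero a
lemma zmul (a : W3 k) : (0 : W3 k) * a = 0 := zero_mul a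

lemma tAB0 : y k 0 * (y k 0 * y k 1) = 0 := by rw [← mul_assoc, rAA, zmul]
lemma tAC0 : y k 0 * (y k 0 * y k 2) = 0 := by rw [← mul_assoc, rAA, zmul]
lemma tAC1 : y k 1 * (y k 0 * y k 2) = 0 := by
  rw [← mul_assoc, hBA, nmul, neg_eq_zero, mul_assoc, rCC, mulz]
lemma tAB1 : y k 1 * (y k 0 * y k 1) = 0 := by
  rw [← mul_assoc, hBA, nmul, neg_eq_zero, mul_assoc, hCB, muln, neg_eq_zero, tAC0]
lemma tAB2 : y k 2 * (y k 0 * y k 1) = 0 := by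
  rw [← mul_assoc, hCA, nmul, neg_eq_zero, mul_assoc, rBB, mulz]
lemma tAC2 : y k 2 * (y k 0 * y k 2) = 0 := by
  rw [← mul_assoc, hCA, nmul, neg_eq_zero, mul_assoc, hBC, tAB0]

lemma triple (i j l : Fin 3) : y k i * (y k j * y k l) = 0 := by
  fin_cases i <;> fin_cases j <;> fin_cases l <;>
    simp [rAA, rBB, rCC, hBA, hCB, hCA, hBC, tAB0, tAB1, tAB2, tAC0, tAC1, tAC2,
      muln, mulz, neg_eq_zero]

/-- Left-regular representation matrices on the 6-dim model with basis
`1, A, B, C, AB, AC` (indices 0..5). -/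
def Mg : Fin 3 → Matrix (Fin 6) (Fin 6) k
  | 0 => Matrix.of fun i j =>
      if i = 1 ∧ j = 0 then 1 else if i = 4 ∧ j = 2 then 1 else
      if i = 5 ∧ j = 3 then 1 else 0
  | 1 => Matrix.of fun i j =>
      if i = 2 ∧ j = 0 then 1 else if i = 5 ∧ j = 1 then -1 else
      if i = 4 ∧ j = 3 then 1 else 0
  | 2 => Matrix.of fun i j =>
      if i = 3 ∧ j = 0 then 1 else if i = 4 ∧ j = 1 then -1 else
      if i = 5 ∧ j = 2 then -1 else 0

lemma mg_rel1 : Mg k 0 * Mg k 0 = 0 := by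
  ext i j
  fin_cases i <;> fin_cases j <;> simp [Mg, Matrix.mul_apply, Fin.sum_univ_six]
lemma mg_rel2 : Mg k 1 * Mg k 1 = 0 := by
  ext i j
  fin_cases i <;> fin_cases j <;> simp [Mg, Matrix.mul_apply, Fin.sum_univ_six]
lemma mg_rel3 : Mg k 2 * Mg k 2 = 0 := by
  ext i j
  fin_cases i <;> fin_cases j <;> simp [Mg, Matrix.mul_apply, Fin.sum_univ_six]
lemma mg_rel4 : Mg k 0 * Mg k 2 + Mg k 2 * Mg k 1 = 0 := by
  ext i j
  fin_cases i <;> fin_cases j <;> simp [Mg, Matrix.mul_apply, Fin.sum_univ_six]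
lemma mg_rel5 : Mg k 0 * Mg k 2 + Mg k 1 * Mg k 0 = 0 := by
  ext i j
  fin_cases i <;> fin_cases j <;> simp [Mg, Matrix.mul_apply, Fin.sum_univ_six]
lemma mg_rel6 : Mg k 0 * Mg k 1 + Mg k 2 * Mg k 0 = 0 := by
  ext i j
  fin_cases i <;> fin_cases j <;> simp [Mg, Matrix.mul_apply, Fin.sum_univ_six]
lemma mg_rel7 : Mg k 0 * Mg k 1 - Mg k 1 * Mg k 2 = 0 := by
  ext i j
  fin_cases i <;> fin_cases j <;> simp [Mg, Matrix.mul_apply, Fin.sum_univ_six]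

/-- The representation of `W3` on the 6-dimensional model. -/
def φ : W3 k →ₐ[k] Matrix (Fin 6) (Fin 6) k :=
  RingQuot.liftAlgHom k ⟨FreeAlgebra.lift k (Mg k), by
    intro a b h
    cases h <;>
      simp [X, mg_rel1, mg_rel2, mg_rel3] <;>
      first
        | simpa using mg_rel4 k
        | simpa using mg_rel5 k
        | simpa using mg_rel6 k
        | simpa [sub_eq_zero] using mg_rel7 k⟩

lemma φy (i : Fin 3) : φ k (y k i) = Mg k i := by
  simp [φ, y, RingQuot.liftAlgHom_mkAlgHom_apply, X]

/-- Evaluate the representation on the basis vector `e₀` (the image of `1`). -/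
def T : W3 k →ₗ[k] (Fin 6 → k) where
  toFun x := fun i => φ k x i 0
  map_add' a b := by funext i; simp [Matrix.add_apply]
  map_smul' c a := by funext i; simp [Matrix.smul_apply]

lemma T1 : T k 1 = Pi.single (0 : Fin 6) 1 := by
  funext i; fin_cases i <;> simp [T, Matrix.one_apply, Pi.single, Function.update]

lemma Ty0 : T k (y k 0) = Pi.single (1 : Fin 6) 1 := by
  funext i; fin_cases i <;> simp [T, φy, Mg, Pi.single, Function.update]
lemma Ty1 : T k (y k 1) = Pi.single (2 : Fin 6) 1 := by
  funext i; fin_cases i <;> simp [T, φy, Mg, Pi.single, Function.update]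
lemma Ty2 : T k (y k 2) = Pi.single (3 : Fin 6) 1 := by
  funext i; fin_cases i <;> simp [T, φy, Mg, Pi.single, Function.update]
lemma TAB : T k (y k 0 * y k 1) = Pi.single (4 : Fin 6) 1 := by
  funext i; fin_cases i <;>
    simp [T, φy, Mg, Matrix.mul_apply, Fin.sum_univ_six, Pi.single, Function.update]
lemma TAC : T k (y k 0 * y k 2) = Pi.single (5 : Fin 6) 1 := by
  funext i; fin_cases i <;>
    simp [T, φy, Mg, Matrix.mul_apply, Fin.sum_univ_six, Pi.single, Function.update]

lemma mulo (a : W3 k) : a * (1 : W3 k) = a := mul_one a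

lemma single_li : LinearIndependent k (fun j : Fin 6 => (Pi.single j 1 : Fin 6 → k)) := by
  have h := (Pi.basisFun k (Fin 6)).linearIndependent
  have e : ⇑(Pi.basisFun k (Fin 6)) = fun j : Fin 6 => (Pi.single j 1 : Fin 6 → k) := by
    funext j; exact Pi.basisFun_apply k (Fin 6) j
  rwa [e] at h

lemma one_ne : (1 : W3 k) ≠ 0 := by
  intro h
  have := congrFun (T1 k)
  rw [h] at this
  have h0 := this 0
  simp at h0

lemma li1 : LinearIndependent k (y k) := by
  apply LinearIndependent.of_comp (T k)
  have hc : (fun i : Fin 3 => (Pi.single ((![1,2,3] : Fin 3 → Fin 6) i) 1 : Fin 6 → k))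
      = ⇑(T k) ∘ y k := by
    funext i; fin_cases i <;> simp [Ty0 k, Ty1 k, Ty2 k]
  exact hc ▸ (single_li k).comp ![1,2,3] (by decide)

lemma li2 : LinearIndependent k ![y k 0 * y k 1, y k 0 * y k 2] := by
  apply LinearIndependent.of_comp (T k)
  have hc : (fun i : Fin 2 => (Pi.single ((![4,5] : Fin 2 → Fin 6) i) 1 : Fin 6 → k))
      = ⇑(T k) ∘ ![y k 0 * y k 1, y k 0 * y k 2] := by
    funext i; fin_cases i <;> simp [TAB k, TAC k]
  exact hc ▸ (single_li k).comp ![4,5] (by decide)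

lemma comp0 : W3comp k 0 = Submodule.span k {1} := by
  rw [W3comp]
  congr 1
  ext z
  simp [List.ofFn_zero, eq_comm]

lemma comp1 : W3comp k 1 = Submodule.span k (Set.range (y k)) := by
  rw [W3comp]
  congr 1
  ext z
  constructor
  · rintro ⟨w, rfl⟩; exact ⟨w 0, by simp [mulo]⟩
  · rintro ⟨i, rfl⟩; exact ⟨fun _ => i, by simp [mulo]⟩

lemma pairmem (i j : Fin 3) :
    y k i * y k j ∈ Submodule.span k (Set.range ![y k 0 * y k 1, y k 0 * y k 2]) := by
  have hr : Set.range ![y k 0 * y k 1, y k 0 * y k 2]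
      = {y k 0 * y k 1, y k 0 * y k 2} := by
    simp [Matrix.range_cons, Matrix.range_empty, Set.pair_comm]
  rw [hr]
  have mAB : y k 0 * y k 1 ∈ Submodule.span k {y k 0 * y k 1, y k 0 * y k 2} :=
    Submodule.subset_span (by simp)
  have mAC : y k 0 * y k 2 ∈ Submodule.span k {y k 0 * y k 1, y k 0 * y k 2} :=
    Submodule.subset_span (by simp)
  fin_cases i <;> fin_cases j <;>
    simp [rAA, rBB, rCC, hBA, hCB, hCA, hBC, neg_mem_iff, Submodule.zero_mem, mAB, mAC]

lemma comp2 : W3comp k 2 = Submodule.span k (Set.range ![y k 0 * y k 1, y k 0 * y k 2]) := by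
  apply le_antisymm
  · rw [W3comp, Submodule.span_le]
    rintro _ ⟨w, rfl⟩
    dsimp only
    have : (List.ofFn fun i : Fin 2 => y k (w i)).prod = y k (w 0) * y k (w 1) := by
      simp [List.ofFn_succ, mulo]
    rw [this]
    exact pairmem k (w 0) (w 1)
  · rw [Submodule.span_le]
    rintro _ ⟨i, rfl⟩
    fin_cases i
    · exact Submodule.subset_span ⟨![0,1], by simp [List.ofFn_succ, mulo]⟩
    · exact Submodule.subset_span ⟨![0,2], by simp [List.ofFn_succ, mulo]⟩

lemma word3 (v : Fin 3 → Fin 3) : (List.ofFn fun i => y k (v i)).prod = 0 := by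
  have : (List.ofFn fun i : Fin 3 => y k (v i)).prod
      = y k (v 0) * (y k (v 1) * y k (v 2)) := by
    simp [List.ofFn_succ, mulo, mul_assoc]
  rw [this, triple]


/-- The Hilbert series of `W₃` is `1 + 3t + 2t²`: its graded components have
dimensions `1, 3, 2, 0, 0, …`. -/
theorem W3_hilbert_series (k : Type) [Field k] (hk : (2 : k) ≠ 0) :
    Module.finrank k ↥(W3comp k 0) = 1 ∧
    Module.finrank k ↥(W3comp k 1) = 3 ∧
    Module.finrank k ↥(W3comp k 2) = 2 ∧
    ∀ d : ℕ, 3 ≤ d → W3comp k d = ⊥ := by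
  refine ⟨?_, ?_, ?_, ?_⟩
  · rw [comp0, finrank_span_singleton (one_ne k)]
  · rw [comp1, finrank_span_eq_card (li1 k), Fintype.card_fin]
  · rw [comp2, finrank_span_eq_card (li2 k), Fintype.card_fin]
  · intro d hd
    obtain ⟨e, rfl⟩ : ∃ e, d = e + 3 := ⟨d - 3, by omega⟩
    rw [W3comp, Submodule.span_eq_bot]
    rintro _ ⟨w, rfl⟩
    dsimp only
    rw [List.ofFn_add, List.prod_append, word3, mulz]
end
end
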